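/- arXiv:2603.24717 — 2 statements merged into one kernel-verified Lean document; each statement's English description precedes it below -/
import Mathlib

section
/- Let |ψ⟩ satisfy (−1)ᵇ Q|ψ⟩ = |ψ⟩ where Q is a Hermitian involution and b ∈ {0,1}, and let P be a Hermitian involution with PQ = −QP. Then for each r ∈ {0,1}: Q^{r+b} · exp(i(π/4)(iQP)) |ψ⟩ = (−1)^{b(r+b)} · (I + (−1)ʳ P)/√2 · |ψ⟩, where the exponent r+b is taken mod 2. -/
/-!
Since `P` and `Q` are anticommuting involutions, `(QP)² = -1`, so `z ↦ re z + im z • QP` embeds `ℂ`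
in the matrix algebra and carries `exp (-(π/4) i)` to `exp (-(π/4) QP) = (1 - QP)/√2`. On the
`(-1)ᵇ`-eigenvector `ψ` of `Q`, anticommutation gives `QPψ = -(-1)ᵇ Pψ`; hence each application of
`Q` multiplies `ψ + t Pψ` by `(-1)ᵇ` and flips the sign of `t`, and this accounts for the phase
and for the sign in front of `P`.
-/

open Matrix

open NormedSpace

theorem exp_real_smul_of_mul_self_eq_neg_one {A : Type*} [NormedRing A] [NormedAlgebra ℝ A]
    [Algebra ℚ A] {J : A} (hJ : J * J = -1) (t : ℝ) :
    exp (t • J) = Real.cos t • (1 : A) + Real.sin t • J := by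
  let φ : ℂ →ₐ[ℝ] A := Complex.lift ⟨J, hJ⟩
  have hφ : Continuous φ := φ.toLinearMap.continuous_of_finiteDimensional
  have hφI : φ (t * Complex.I) = t • J := by simp [φ]
  rw [← hφI, ← map_exp φ hφ, ← Complex.exp_eq_exp_ℂ, Complex.exp_mul_I]
  simp [φ, ← Complex.ofReal_cos, ← Complex.ofReal_sin, Algebra.algebraMap_eq_smul_one]

theorem Matrix.exp_real_smul_of_mul_self_eq_neg_one {n : Type*} [Fintype n] [DecidableEq n]
    {J : Matrix n n ℂ} (hJ : J * J = -1) (t : ℝ) :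
    exp (t • J) = Real.cos t • (1 : Matrix n n ℂ) + Real.sin t • J := by
  let _ : NormedRing (Matrix n n ℂ) := Matrix.linftyOpNormedRing
  let _ : NormedAlgebra ℝ (Matrix n n ℂ) := Matrix.linftyOpNormedAlgebra
  exact _root_.exp_real_smul_of_mul_self_eq_neg_one hJ t

theorem mul_mul_self_eq_neg_one_of_anticommute {R : Type*} [Ring R] {P Q : R}
    (hP : P * P = 1) (hQ : Q * Q = 1) (hPQ : P * Q = -(Q * P)) :
    Q * P * (Q * P) = -1 := by
  rw [mul_assoc, ← mul_assoc P, hPQ, neg_mul, mul_assoc, hP, mul_one, mul_neg, hQ]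

section Anticommute

variable {n R : Type*} [Fintype n] [CommRing R] {P Q : Matrix n n R} {ψ : n → R} {s : R}

theorem mulVec_mulVec_of_anticommute (hPQ : P * Q = -(Q * P)) (hψ : Q *ᵥ ψ = s • ψ) :
    Q *ᵥ P *ᵥ ψ = -s • P *ᵥ ψ := by
  rw [mulVec_mulVec, ← neg_neg (Q * P), ← hPQ, neg_mulVec, ← mulVec_mulVec, hψ, mulVec_smul,
    neg_smul]

theorem mulVec_add_smul_mulVec_of_anticommute (hPQ : P * Q = -(Q * P)) (hψ : Q *ᵥ ψ = s • ψ)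
    (t : R) : Q *ᵥ (ψ + t • P *ᵥ ψ) = s • (ψ + (-t) • P *ᵥ ψ) := by
  rw [mulVec_add, mulVec_smul, mulVec_mulVec_of_anticommute hPQ hψ, hψ]
  module

theorem pow_mulVec_add_smul_mulVec_of_anticommute [DecidableEq n] (hPQ : P * Q = -(Q * P))
    (hψ : Q *ᵥ ψ = s • ψ) (k : ℕ) (t : R) :
    (Q ^ k) *ᵥ (ψ + t • P *ᵥ ψ) = s ^ k • (ψ + ((-1) ^ k * t) • P *ᵥ ψ) := by
  induction k with
  | zero => simp
  | succ k ih =>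
    rw [pow_succ', ← mulVec_mulVec, ih, mulVec_smul, mulVec_add_smul_mulVec_of_anticommute hPQ hψ,
      smul_smul, pow_succ, pow_succ, mul_neg_one, neg_mul]

end Anticommute

theorem measure_as_exp_general {d : ℕ} (P Q : Matrix (Fin d) (Fin d) ℂ)
    (ψ : Fin d → ℂ) (b r : ℕ)
    (hQ2 : Q * Q = 1)
    (hP2 : P * P = 1)
    (hanti : P * Q = -(Q * P))
    (hstab : ((-1 : ℂ) ^ b) • Q.mulVec ψ = ψ) :
    (Q ^ ((r + b) % 2)).mulVec
        ((NormedSpace.exp ((Complex.I * (Real.pi / 4 : ℝ)) •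
          (Complex.I • (Q * P)))).mulVec ψ) =
      ((-1 : ℂ) ^ (b * ((r + b) % 2))) •
        ((Real.sqrt 2 : ℂ)⁻¹ •
          (((1 : Matrix (Fin d) (Fin d) ℂ) + ((-1 : ℂ) ^ r) • P).mulVec ψ)) := by
  set s : ℂ := (-1) ^ b
  set k := (r + b) % 2
  have hs : s * s = 1 := by rw [← pow_add, ← two_mul, pow_mul, neg_one_sq, one_pow]
  have hψ : Q *ᵥ ψ = s • ψ :=
    calc Q *ᵥ ψ = (s * s) • Q *ᵥ ψ := by rw [hs, one_smul]
      _ = s • ψ := by rw [mul_smul, hstab]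
  have hexp : exp ((Complex.I * (Real.pi / 4 : ℝ)) • (Complex.I • (Q * P))) =
      (Real.sqrt 2 : ℂ)⁻¹ • (1 - Q * P) := by
    rw [smul_smul, mul_right_comm, Complex.I_mul_I, neg_one_mul, ← Complex.ofReal_neg,
      Complex.coe_smul, Matrix.exp_real_smul_of_mul_self_eq_neg_one
        (mul_mul_self_eq_neg_one_of_anticommute hP2 hQ2 hanti),
      Real.cos_neg, Real.sin_neg, Real.cos_pi_div_four, Real.sin_pi_div_four,
      Real.sqrt_div_self, neg_smul, ← sub_eq_add_neg, ← smul_sub, ← Complex.ofReal_inv,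
      Complex.coe_smul]
  have hsign : (-1 : ℂ) ^ k * s = (-1) ^ r := by
    rw [← pow_add, neg_one_pow_eq_pow_mod_two, neg_one_pow_eq_pow_mod_two (n := r)]
    congr 1
    omega
  have h1 : (1 - Q * P) *ᵥ ψ = ψ + s • P *ᵥ ψ := by
    rw [sub_mulVec, one_mulVec, ← mulVec_mulVec, mulVec_mulVec_of_anticommute hanti hψ, neg_smul,
      sub_neg_eq_add]
  rw [hexp, smul_mulVec, h1, mulVec_smul, pow_mulVec_add_smul_mulVec_of_anticommute hanti hψ,
    hsign, smul_comm, ← pow_mul, add_mulVec, one_mulVec, smul_mulVec]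

/-- Measurement as unitary with phase: if `(−1)ᵇ Q |ψ⟩ = |ψ⟩` and `P`
anticommutes with `Q`, then for each outcome `r ∈ {0,1}`,
`Q^{(r+b) mod 2} exp(i(π/4)(iQP)) |ψ⟩ = (−1)^{b((r+b) mod 2)} (I + (−1)ʳ P)/√2 |ψ⟩`. -/
theorem measure_as_exp {d : ℕ} (P Q : Matrix (Fin d) (Fin d) ℂ)
    (ψ : Fin d → ℂ) (b r : ℕ) (hb : b ≤ 1) (hr : r ≤ 1)
    (hQ2 : Q * Q = 1) (hQH : Qᴴ = Q)
    (hP2 : P * P = 1) (hPH : Pᴴ = P)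
    (hanti : P * Q = -(Q * P))
    (hstab : ((-1 : ℂ) ^ b) • Q.mulVec ψ = ψ) :
    (Q ^ ((r + b) % 2)).mulVec
        ((NormedSpace.exp ((Complex.I * (Real.pi / 4 : ℝ)) •
          (Complex.I • (Q * P)))).mulVec ψ) =
      ((-1 : ℂ) ^ (b * ((r + b) % 2))) •
        ((Real.sqrt 2 : ℂ)⁻¹ •
          (((1 : Matrix (Fin d) (Fin d) ℂ) + ((-1 : ℂ) ^ r) • P).mulVec ψ)) :=
  measure_as_exp_general P Q ψ b r hQ2 hP2 hanti hstab
end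

section
/- Let P₁, P₂ be commuting Hermitian involutions and Q another Hermitian involution such that Q either commutes or anticommutes with each of P₁, P₂; write ⟦Pᵢ,Q⟧ = 0 if they commute and 1 if they anticommute. Then Λ(P₁,P₂) · Q · Λ(P₁,P₂) = P₁^{⟦P₂,Q⟧} · Q · P₂^{⟦P₁,Q⟧}. -/
/-!
Write `e = (1 + P₁)/2`, the projection onto the `+1` eigenspace of `P₁`, so that
`Λ(P₁,P₂) = e + (1 - e) P₂`. Since `e` commutes with `P₂`, we get `Λ e = e` and
`Λ (1 - e) = (1 - e) P₂`, hence `Λ Q Λ = Λ Q e + Λ Q (1 - e) P₂`. If `Q` commutes with `P₁` it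
commutes with `e`; if it anticommutes, it swaps `e` and `1 - e`. Either way `Λ Q Λ` becomes
`(e ± (1 - e)) Q P₂^{⟦P₁,Q⟧}`, and `e + (1 - e) = 1`, `e - (1 - e) = P₁`.
-/

open Matrix

/-- Controlled-Pauli operator `Λ(P₁,P₂) = (I+P₁)/2 + ((I−P₁)/2)·P₂`. -/
noncomputable def ctrlPauli {d : ℕ} (P₁ P₂ : Matrix (Fin d) (Fin d) ℂ) :
    Matrix (Fin d) (Fin d) ℂ :=
  ((1 : ℂ) / 2) • ((1 : Matrix (Fin d) (Fin d) ℂ) + P₁) +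
    ((1 : ℂ) / 2) • (((1 : Matrix (Fin d) (Fin d) ℂ) - P₁) * P₂)

theorem Even.pow_eq_one_of_mul_self_eq_one {M : Type*} [Monoid M] {x : M} (hx : x * x = 1)
    {n : ℕ} (hn : Even n) : x ^ n = 1 := by
  obtain ⟨k, rfl⟩ := hn
  rw [← two_mul, pow_mul, sq, hx, one_pow]

theorem Odd.pow_eq_self_of_mul_self_eq_one {M : Type*} [Monoid M] {x : M} (hx : x * x = 1)
    {n : ℕ} (hn : Odd n) : x ^ n = x := by
  obtain ⟨k, rfl⟩ := hn
  rw [pow_succ, pow_mul, sq, hx, one_pow, one_mul]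

section Ring

variable {R : Type*} [Ring R] {e U Q : R}

def controlled (e U : R) : R := e + (1 - e) * U

theorem controlled_mul_self (he : IsIdempotentElem e) (heU : Commute e U) :
    controlled e U * e = e := by
  rw [controlled, add_mul, he.eq, mul_assoc, ← heU.eq, ← mul_assoc, he.one_sub_mul_self,
    zero_mul, add_zero]

theorem controlled_mul_one_sub_self (he : IsIdempotentElem e) (heU : Commute e U) :
    controlled e U * (1 - e) = (1 - e) * U := by
  rw [controlled, add_mul, he.mul_one_sub_self, zero_add, mul_assoc,
    ← ((Commute.one_left U).sub_left heU).eq, ← mul_assoc, he.one_sub.eq]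

theorem controlled_mul_mul_controlled (e U Q : R) :
    controlled e U * Q * controlled e U =
      controlled e U * Q * e + controlled e U * Q * (1 - e) * U := by
  rw [mul_assoc _ (1 - e), ← mul_add]
  rfl

theorem controlled_mul_mul_controlled_of_commute (he : IsIdempotentElem e) (heU : Commute e U)
    (heQ : Commute e Q) :
    controlled e U * Q * controlled e U = e * Q + (1 - e) * (U * Q * U) := by
  rw [controlled_mul_mul_controlled, mul_assoc _ Q, ← heQ.eq, mul_assoc _ Q,
    ← ((Commute.one_left Q).sub_left heQ).eq, ← mul_assoc, ← mul_assoc,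
    controlled_mul_self he heU, controlled_mul_one_sub_self he heU, mul_assoc (_ * U), mul_assoc,
    mul_assoc U]

theorem controlled_mul_mul_controlled_of_swap (he : IsIdempotentElem e) (heU : Commute e U)
    (hQe : Q * e = (1 - e) * Q) :
    controlled e U * Q * controlled e U = (1 - e) * U * Q + e * Q * U := by
  have hQf : Q * (1 - e) = e * Q := by rw [mul_one_sub, hQe, sub_mul, one_mul, sub_sub_cancel]
  rw [controlled_mul_mul_controlled, mul_assoc _ Q, hQe, mul_assoc _ Q, hQf, ← mul_assoc,
    ← mul_assoc, controlled_mul_self he heU, controlled_mul_one_sub_self he heU]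

end Ring

section Algebra

variable {𝕜 A : Type*} [Field 𝕜] [Ring A] [Algebra 𝕜 A] {P U Q : A}

variable (𝕜) in
def plusProj (P : A) : A := (1 / 2 : 𝕜) • (1 + P)

theorem one_sub_plusProj [NeZero (2 : 𝕜)] (P : A) :
    1 - plusProj 𝕜 P = (1 / 2 : 𝕜) • (1 - P) := by
  rw [plusProj, sub_eq_iff_eq_add, ← smul_add, sub_add_add_cancel, ← two_smul 𝕜, smul_smul,
    one_div_mul_cancel two_ne_zero, one_smul]

theorem plusProj_isIdempotentElem [NeZero (2 : 𝕜)] (hP : P * P = 1) :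
    IsIdempotentElem (plusProj 𝕜 P) := by
  have h2 : (1 / 2 : 𝕜) * (1 / 2) * 2 = 1 / 2 := by field_simp
  rw [IsIdempotentElem, plusProj, smul_mul_smul_comm, add_mul, one_mul, mul_add, mul_one, hP,
    add_comm P 1, ← two_smul 𝕜 (1 + P), smul_smul, h2]

theorem Commute.plusProj_left (h : Commute P U) : Commute (plusProj 𝕜 P) U :=
  ((Commute.one_left U).add_left h).smul_left _

theorem mul_plusProj_of_anticommute [NeZero (2 : 𝕜)] (hPQ : P * Q = -(Q * P)) :
    Q * plusProj 𝕜 P = (1 - plusProj 𝕜 P) * Q := by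
  rw [one_sub_plusProj, plusProj, mul_smul_comm, smul_mul_assoc, mul_add, sub_mul, hPQ, mul_one,
    one_mul, sub_neg_eq_add]

theorem plusProj_add_neg_one_pow_smul [NeZero (2 : 𝕜)] (hP : P * P = 1) (n : ℕ) :
    plusProj 𝕜 P + (-1 : 𝕜) ^ n • (1 - plusProj 𝕜 P) = P ^ n := by
  rcases Nat.even_or_odd n with hn | hn
  · rw [hn.neg_one_pow, one_smul, add_sub_cancel, hn.pow_eq_one_of_mul_self_eq_one hP]
  · rw [hn.neg_one_pow, neg_one_smul, ← sub_eq_add_neg, one_sub_plusProj, plusProj, ← smul_sub,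
      add_sub_sub_cancel, ← two_smul 𝕜, smul_smul, one_div_mul_cancel two_ne_zero, one_smul,
      hn.pow_eq_self_of_mul_self_eq_one hP]

theorem controlled_plusProj_mul_mul_controlled_plusProj [NeZero (2 : 𝕜)] (hP : P * P = 1)
    (hU : U * U = 1) (hPU : Commute P U) {a b : ℕ} (hPQ : P * Q = (-1 : 𝕜) ^ a • (Q * P))
    (hUQ : U * Q = (-1 : 𝕜) ^ b • (Q * U)) :
    controlled (plusProj 𝕜 P) U * Q * controlled (plusProj 𝕜 P) U = P ^ b * Q * U ^ a := by
  have he : IsIdempotentElem (plusProj 𝕜 P) := plusProj_isIdempotentElem hP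
  have heU : Commute (plusProj 𝕜 P) U := hPU.plusProj_left
  have hUQU : U * Q * U = (-1 : 𝕜) ^ b • Q := by rw [hUQ, smul_mul_assoc, mul_assoc, hU, mul_one]
  rw [← plusProj_add_neg_one_pow_smul (𝕜 := 𝕜) hP b, add_mul, smul_mul_assoc]
  rcases Nat.even_or_odd a with ha | ha
  · have heQ : Commute (plusProj 𝕜 P) Q :=
      Commute.plusProj_left (by rwa [ha.neg_one_pow, one_smul] at hPQ)
    rw [controlled_mul_mul_controlled_of_commute he heU heQ, hUQU, mul_smul_comm,
      ha.pow_eq_one_of_mul_self_eq_one hU, mul_one]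
  · have hQe : Q * plusProj 𝕜 P = (1 - plusProj 𝕜 P) * Q :=
      mul_plusProj_of_anticommute (by rwa [ha.neg_one_pow, neg_one_smul] at hPQ)
    rw [controlled_mul_mul_controlled_of_swap he heU hQe, mul_assoc _ U, hUQ, mul_smul_comm,
      ha.pow_eq_self_of_mul_self_eq_one hU, add_mul, smul_mul_assoc, ← mul_assoc, add_comm]

end Algebra

theorem ctrlPauli_eq_controlled {d : ℕ} (P₁ P₂ : Matrix (Fin d) (Fin d) ℂ) :
    ctrlPauli P₁ P₂ = controlled (plusProj ℂ P₁) P₂ := by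
  rw [controlled, one_sub_plusProj, plusProj, ctrlPauli, smul_mul_assoc]

theorem ctrlPauli_conj_general {d : ℕ} (P₁ P₂ Q : Matrix (Fin d) (Fin d) ℂ)
    (h1 : P₁ * P₁ = 1)
    (h2 : P₂ * P₂ = 1)
    (hcomm : P₁ * P₂ = P₂ * P₁)
    (c₁ c₂ : ℕ)
    (h1Q : P₁ * Q = ((-1 : ℂ) ^ c₁) • (Q * P₁))
    (h2Q : P₂ * Q = ((-1 : ℂ) ^ c₂) • (Q * P₂)) :
    ctrlPauli P₁ P₂ * Q * ctrlPauli P₁ P₂ = P₁ ^ c₂ * Q * P₂ ^ c₁ := by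
  rw [ctrlPauli_eq_controlled]
  exact controlled_plusProj_mul_mul_controlled_plusProj h1 h2 hcomm h1Q h2Q

/-- `Λ(P₁,P₂) Q Λ(P₁,P₂) = P₁^{⟦P₂,Q⟧} Q P₂^{⟦P₁,Q⟧}`, where `⟦Pᵢ,Q⟧ ∈ {0,1}`
records whether `Pᵢ` and `Q` commute (`0`) or anticommute (`1`). -/
theorem ctrlPauli_conj {d : ℕ} (P₁ P₂ Q : Matrix (Fin d) (Fin d) ℂ)
    (h1 : P₁ * P₁ = 1) (h1H : P₁ᴴ = P₁)
    (h2 : P₂ * P₂ = 1) (h2H : P₂ᴴ = P₂)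
    (hQ : Q * Q = 1) (hQH : Qᴴ = Q)
    (hcomm : P₁ * P₂ = P₂ * P₁)
    (c₁ c₂ : ℕ) (hc₁ : c₁ ≤ 1) (hc₂ : c₂ ≤ 1)
    (h1Q : P₁ * Q = ((-1 : ℂ) ^ c₁) • (Q * P₁))
    (h2Q : P₂ * Q = ((-1 : ℂ) ^ c₂) • (Q * P₂)) :
    ctrlPauli P₁ P₂ * Q * ctrlPauli P₁ P₂ = P₁ ^ c₂ * Q * P₂ ^ c₁ :=
  ctrlPauli_conj_general P₁ P₂ Q h1 h2 hcomm c₁ c₂ h1Q h2Q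
end
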